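/- arXiv:1610.04349 — 2 statements merged into one kernel-verified Lean document; each statement's English description precedes it below -/
import Mathlib

section
/- In the square-bit (2-dimensional gbit) state space [0,1]² with branch measurement Z given by the first coordinate and complementary measurement X by the second, the X-flip map T(z,x) = (z, 1−x) is a phase operation with respect to Z (it preserves all Z statistics), but it is not branch-local to either branch: there exists a state s with Z-coordinate 0 (no support on branch Z=1) such that T s ≠ s, and likewise for Z-coordinate 1. Hence the only transformation in the phase group {id, X-flip} localizable to either branch is the identity. -/
/-- Square-bit states: pairs (P(Z=+1), P(X=+1)) ∈ [0,1]². -/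
def SquareBit : Set (ℝ × ℝ) := Set.Icc (0 : ℝ) 1 ×ˢ Set.Icc (0 : ℝ) 1

def Xflip : ℝ × ℝ → ℝ × ℝ := fun s => (s.1, 1 - s.2)

@[simp]
theorem Xflip_fst (s : ℝ × ℝ) : (Xflip s).1 = s.1 := rfl

theorem Xflip_eq_self_iff (s : ℝ × ℝ) : Xflip s = s ↔ s.2 = 1 / 2 := by
  simp only [Xflip, Prod.ext_iff, true_and]
  constructor <;> intro h <;> linarith

theorem mk_zero_mem_SquareBit {z : ℝ} (hz : z ∈ Set.Icc (0 : ℝ) 1) : (z, (0 : ℝ)) ∈ SquareBit :=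
  Set.mk_mem_prod hz (Set.left_mem_Icc.mpr zero_le_one)

theorem exists_mem_SquareBit_fst_eq_Xflip_ne {z : ℝ} (hz : z ∈ Set.Icc (0 : ℝ) 1) :
    ∃ s ∈ SquareBit, s.1 = z ∧ Xflip s ≠ s := by
  refine ⟨(z, 0), mk_zero_mem_SquareBit hz, rfl, ?_⟩
  rw [Ne, Xflip_eq_self_iff]
  norm_num

/-- The X-flip is a phase operation for Z on the square bit, but is not branch-local
to either branch; hence the only phase-group element localizable to a branch is the
identity. -/
theorem squarebit_no_local_phase :
    (∀ s ∈ SquareBit, (Xflip s).1 = s.1) ∧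
    (∃ s ∈ SquareBit, s.1 = 0 ∧ Xflip s ≠ s) ∧
    (∃ s ∈ SquareBit, s.1 = 1 ∧ Xflip s ≠ s) ∧
    (∀ T ∈ ({id, Xflip} : Set (ℝ × ℝ → ℝ × ℝ)),
      ((∀ s ∈ SquareBit, s.1 = 0 → T s = s) ∨ (∀ s ∈ SquareBit, s.1 = 1 → T s = s)) →
        T = id) := by
  have moves_on_branch_zero := exists_mem_SquareBit_fst_eq_Xflip_ne (z := 0) (by norm_num)
  have moves_on_branch_one := exists_mem_SquareBit_fst_eq_Xflip_ne (z := 1) (by norm_num)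
  refine ⟨fun s _ => Xflip_fst s, moves_on_branch_zero, moves_on_branch_one, ?_⟩
  rintro T (rfl | rfl) hlocal
  · rfl
  · exfalso
    rcases hlocal with hlocal | hlocal
    · obtain ⟨s, hs, hs1, hmoved⟩ := moves_on_branch_zero
      exact hmoved (hlocal s hs hs1)
    · obtain ⟨s, hs, hs1, hmoved⟩ := moves_on_branch_one
      exact hmoved (hlocal s hs hs1)
end

section
/- For the distributed 1-bit Deutsch computation on Spekkens ontic states without the epistemic restriction: with agent encodings g(b) ∈ {id,(1 2)} for the upper branch and h(b) ∈ {id,(3 4)} for the lower branch (g(0)=h(0)=id, g(1)=(1 2), h(1)=(3 4)), and initial epistemic state {1,3}, the image set is {1,3} or {2,4} when f(0)=f(1) (constant), and {1,4} or {2,3} when f(0)≠f(1) (balanced); consequently no single two-element subset E ⊆ {1,2,3,4} satisfies E ⊇ image when f is constant and E ∩ image = ∅ when f is balanced, for all four functions f. -/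
/-!
The two encodings act on the disjoint pairs `{0, 1}` and `{2, 3}` separately, so the ontic
state `0` ends up at `f 0` and `2` at `2 + f 1`: the output records `f 0` and `f 1`
individually, never their parity. The outputs `{0, 2}` and `{1, 3}` of the two constant
functions already cover all four ontic states, so an effect containing both is all of `Fin 4`.
-/

open Equiv

def upperEnc (b : Fin 2) : Perm (Fin 4) := if b = 1 then swap 0 1 else 1

def lowerEnc (b : Fin 2) : Perm (Fin 4) := if b = 1 then swap 2 3 else 1

def deutschOutput (f : Fin 2 → Fin 2) : Finset (Fin 4) :=
  Finset.image (upperEnc (f 0) * lowerEnc (f 1)) {0, 2}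

theorem upperEnc_mul_lowerEnc_apply_zero (b c : Fin 2) :
    (upperEnc b * lowerEnc c) 0 = Fin.castAdd 2 b := by
  fin_cases b <;> fin_cases c <;> decide

theorem upperEnc_mul_lowerEnc_apply_two (b c : Fin 2) :
    (upperEnc b * lowerEnc c) 2 = Fin.natAdd 2 c := by
  fin_cases b <;> fin_cases c <;> decide

theorem deutschOutput_eq (f : Fin 2 → Fin 2) :
    deutschOutput f = {Fin.castAdd 2 (f 0), Fin.natAdd 2 (f 1)} := by
  simp only [deutschOutput, Finset.image_insert, Finset.image_singleton,
    upperEnc_mul_lowerEnc_apply_zero, upperEnc_mul_lowerEnc_apply_two]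

theorem deutschOutput_of_eq {f : Fin 2 → Fin 2} (hf : f 0 = f 1) :
    deutschOutput f = {0, 2} ∨ deutschOutput f = {1, 3} := by
  rw [deutschOutput_eq, ← hf]
  generalize f 0 = b
  fin_cases b <;> decide

theorem deutschOutput_of_ne {f : Fin 2 → Fin 2} (hf : f 0 ≠ f 1) :
    deutschOutput f = {0, 3} ∨ deutschOutput f = {1, 2} := by
  rw [deutschOutput_eq]
  generalize f 0 = b, f 1 = c at hf
  revert hf
  fin_cases b <;> fin_cases c <;> decide

theorem eq_univ_of_deutschOutput_const_subset {E : Finset (Fin 4)}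
    (hE : ∀ b, deutschOutput (fun _ => b) ⊆ E) : E = Finset.univ := by
  refine Finset.eq_univ_of_forall fun x => Fin.addCases (m := 2) (n := 2) (fun b => ?_)
    (fun b => ?_) x <;> apply hE b <;> simp [deutschOutput_eq]

theorem not_exists_card_two_distinguishing_effect :
    ¬ ∃ E : Finset (Fin 4), E.card = 2 ∧ ∀ f : Fin 2 → Fin 2,
      (f 0 = f 1 → deutschOutput f ⊆ E) ∧ (f 0 ≠ f 1 → Disjoint E (deutschOutput f)) := by
  rintro ⟨E, hcard, hE⟩
  rw [eq_univ_of_deutschOutput_const_subset fun b => (hE fun _ => b).1 rfl] at hcard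
  simp at hcard

/-- Distributed 1-bit Deutsch computation on Spekkens ontic states without the epistemic
restriction: with encodings g(0)=id, g(1)=(0 1) on the upper branch and h(0)=id,
h(1)=(2 3) on the lower branch, and initial epistemic state {0,2}, the image is
{0,2} or {1,3} for constant f and {0,3} or {1,2} for balanced f; and no two-element
effect E contains the image for every constant f while being disjoint from it for every
balanced f. -/
theorem spekkens_ontic_deutsch_fails :
    let g : Fin 2 → Equiv.Perm (Fin 4) := fun b => if b = 1 then Equiv.swap 0 1 else 1
    let h : Fin 2 → Equiv.Perm (Fin 4) := fun b => if b = 1 then Equiv.swap 2 3 else 1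
    let out : (Fin 2 → Fin 2) → Finset (Fin 4) :=
      fun f => Finset.image (g (f 0) * h (f 1)) {0, 2}
    (∀ f : Fin 2 → Fin 2,
      (f 0 = f 1 → out f = {0, 2} ∨ out f = {1, 3}) ∧
      (f 0 ≠ f 1 → out f = {0, 3} ∨ out f = {1, 2})) ∧
    ¬ ∃ E : Finset (Fin 4), E.card = 2 ∧ ∀ f : Fin 2 → Fin 2,
        (f 0 = f 1 → out f ⊆ E) ∧ (f 0 ≠ f 1 → Disjoint E (out f)) :=
  ⟨fun _ => ⟨deutschOutput_of_eq, deutschOutput_of_ne⟩,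
    not_exists_card_two_distinguishing_effect⟩
end
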